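/- arXiv:0801.2339 — 4 statements merged into one kernel-verified Lean document; each statement's English description precedes it below -/
import Mathlib

section
/- Let 𝔤 be a finite-dimensional Lie algebra over a field of characteristic zero such that Tr(ad(b)) = 0 for all b ∈ 𝔤 (e.g. 𝔤 reductive), let A be an associative algebra, and μ : 𝔤 → A a Lie algebra homomorphism. If x' = Σᵢ aᵢ ⊗ bᵢ ∈ (A ⊗ 𝔤)^𝔤 is invariant under the diagonal adjoint action (where bᵢ is a basis of 𝔤), then Σᵢ [μ(bᵢ), aᵢ] = 0; consequently Σᵢ aᵢ μ(bᵢ) = Σᵢ μ(bᵢ) aᵢ. -/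
attribute [local instance] LieRing.ofAssociativeRing

/-!
Read off the `j`-th coordinate (in the basis `b` of the `L`-factor) of the invariance equation
for `z = b j`, and sum over `j`: the `A`-factor contributes `∑ⱼ [μ(bⱼ), aⱼ]`, while the
`L`-factor contributes `∑ᵢ (∑ⱼ (b.repr [bⱼ, bᵢ])ⱼ) • aᵢ = -∑ᵢ Tr(ad bᵢ) • aᵢ = 0`.
-/

open TensorProduct LinearMap

theorem TensorProduct.equivFinsuppOfBasisRight_rTensor_add_lTensor_sum
    {R M N ι : Type*} [CommRing R] [AddCommGroup M] [Module R M] [AddCommGroup N] [Module R N]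
    [Fintype ι] [DecidableEq ι] (b : Module.Basis ι R N)
    (f : M →ₗ[R] M) (g : N →ₗ[R] N) (a : ι → M) (j : ι) :
    equivFinsuppOfBasisRight b ((rTensor N f + lTensor M g) (∑ i, a i ⊗ₜ[R] b i)) j =
      f (a j) + ∑ i, b.repr (g (b i)) j • a i := by
  simp [map_sum, Finset.sum_add_distrib, Finsupp.single_apply]

theorem LieAlgebra.sum_repr_lie_basis_eq_neg_trace_ad {K L ι : Type*} [CommRing K] [LieRing L]
    [LieAlgebra K L] [Fintype ι] [DecidableEq ι] (b : Module.Basis ι K L) (x : L) :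
    ∑ j, b.repr ⁅b j, x⁆ j = -trace K L (LieAlgebra.ad K L x) := by
  rw [trace_eq_matrix_trace K b, Matrix.trace, ← Finset.sum_neg_distrib]
  refine Finset.sum_congr rfl fun j _ => ?_
  rw [Matrix.diag_apply, toMatrix_apply, LieAlgebra.ad_apply, ← lie_skew, map_neg,
    Finsupp.neg_apply]

theorem stmt1_general {K : Type*} [Field K]
    (L : Type*) [LieRing L] [LieAlgebra K L]
    (A : Type*) [Ring A] [Algebra K A]
    (μ : L →ₗ⁅K⁆ A)
    (htr : ∀ z : L, LinearMap.trace K L ((LieAlgebra.ad K L z : L →ₗ[K] L)) = 0)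
    {ι : Type*} [Fintype ι] (b : Module.Basis ι K L) (a : ι → A)
    (hinv : ∀ z : L,
      (LinearMap.rTensor L (LinearMap.mulLeft K (μ z) - LinearMap.mulRight K (μ z))
        + LinearMap.lTensor A ((LieAlgebra.ad K L z : L →ₗ[K] L)))
        (∑ i, a i ⊗ₜ[K] b i) = 0) :
    (∑ i, ⁅μ (b i), a i⁆) = 0 ∧ (∑ i, a i * μ (b i)) = ∑ i, μ (b i) * a i := by
  classical
  have hcoord (j : ι) : ⁅μ (b j), a j⁆ + ∑ i, b.repr ⁅b j, b i⁆ j • a i = 0 := by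
    have h := congrArg (fun t => equivFinsuppOfBasisRight b t j) (hinv (b j))
    simpa only [equivFinsuppOfBasisRight_rTensor_add_lTensor_sum, LinearMap.sub_apply,
      mulLeft_apply, mulRight_apply, LieAlgebra.ad_apply, LieHom.coe_toLinearMap, map_zero,
      Finsupp.coe_zero, Pi.zero_apply, ← Ring.lie_def] using h
  have htrace : ∑ i, ∑ j, b.repr ⁅b j, b i⁆ j • a i = 0 :=
    Finset.sum_eq_zero fun i _ => by
      rw [← Finset.sum_smul, LieAlgebra.sum_repr_lie_basis_eq_neg_trace_ad, htr, neg_zero,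
        zero_smul]
  have hsum : ∑ i, ⁅μ (b i), a i⁆ = 0 := by
    have h := Finset.sum_eq_zero (s := Finset.univ) fun j _ => hcoord j
    rwa [Finset.sum_add_distrib, Finset.sum_comm, htrace, add_zero] at h
  refine ⟨hsum, ?_⟩
  rw [eq_comm, ← sub_eq_zero, ← Finset.sum_sub_distrib]
  simpa only [Ring.lie_def] using hsum

/-- Let `𝔤` be a finite-dimensional Lie algebra over a field of
characteristic zero with `Tr(ad b) = 0` for all `b` (e.g. `𝔤` reductive), `A` an
associative algebra, `μ : 𝔤 → A` a Lie algebra homomorphism.  If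
`x' = Σᵢ aᵢ ⊗ bᵢ ∈ (A ⊗ 𝔤)^𝔤` is invariant under the diagonal adjoint action, where
`(bᵢ)` is a basis of `𝔤`, then `Σᵢ [μ(bᵢ), aᵢ] = 0`, and consequently
`Σᵢ aᵢ μ(bᵢ) = Σᵢ μ(bᵢ) aᵢ`. -/
theorem stmt1 {K : Type*} [Field K] [CharZero K]
    (L : Type*) [LieRing L] [LieAlgebra K L] [Module.Finite K L]
    (A : Type*) [Ring A] [Algebra K A]
    (μ : L →ₗ⁅K⁆ A)
    (htr : ∀ z : L, LinearMap.trace K L ((LieAlgebra.ad K L z : L →ₗ[K] L)) = 0)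
    {ι : Type*} [Fintype ι] (b : Module.Basis ι K L) (a : ι → A)
    (hinv : ∀ z : L,
      (LinearMap.rTensor L (LinearMap.mulLeft K (μ z) - LinearMap.mulRight K (μ z))
        + LinearMap.lTensor A ((LieAlgebra.ad K L z : L →ₗ[K] L)))
        (∑ i, a i ⊗ₜ[K] b i) = 0) :
    (∑ i, ⁅μ (b i), a i⁆) = 0 ∧ (∑ i, a i * μ (b i)) = ∑ i, μ (b i) * a i :=
  stmt1_general L A μ htr b a hinv
end

section
/- Under the hypotheses that 𝔤 is reductive and the adjoint action of 𝔤 on A is completely reducible, the invariants of the quotient (A / A·μ(𝔤))^𝔤 coincide with the quotient of invariants A^𝔤 / (A·μ(𝔤))^𝔤, and moreover (A·μ(𝔤))^𝔤 = (μ(𝔤)·A)^𝔤, so all four descriptions A^𝔤/(Aμ(𝔤))^𝔤, A^𝔤/(μ(𝔤)A)^𝔤, (A/Aμ(𝔤))^𝔤, (A/μ(𝔤)A)^𝔤 of the quantum Hamiltonian reduction agree. -/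
attribute [local instance] LieRing.ofAssociativeRing

/-!
Write `ρ` for the adjoint action `a ↦ ⁅μ z, a⁆`, `M^ρ` for the invariants and `ρW` for the span
of all `ρ z w` with `w ∈ W`. Complete reducibility gives `M^ρ ⊓ ρM = ⊥`, since `ρM` lies in any
invariant complement of `M^ρ`. It also splits every invariant `S` as `S^ρ ⊔ ρS`, because an
invariant subspace without invariant vectors is its own augmentation. As
`a * μ z = μ z * a - ⁅μ z, a⁆`, the left ideal lies in `Jr ⊔ ρA`, so an invariant of `Jl` is an
invariant of `Jr` plus an invariant element of `ρA`, which vanishes; symmetrically for `Jr`.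
An invariant of `A ⧸ J` lifts to its component in an invariant complement of `J`.
-/

namespace OperatorFamily

variable {R M ι : Type*} [Ring R] [AddCommGroup M] [Module R M]

section Definitions

variable (ρ : ι → Module.End R M)

def IsInvariant (W : Submodule R M) : Prop :=
  ∀ i, ∀ x ∈ W, ρ i x ∈ W

def IsCompletelyReducible : Prop :=
  ∀ W : Submodule R M, IsInvariant ρ W → ∃ W', IsInvariant ρ W' ∧ IsCompl W W'

def invariants : Submodule R M :=
  ⨅ i, LinearMap.ker (ρ i)

def augmentation (W : Submodule R M) : Submodule R M :=
  ⨆ i, W.map (ρ i)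

end Definitions

variable {ρ : ι → Module.End R M}

lemma mem_invariants {x : M} : x ∈ invariants ρ ↔ ∀ i, ρ i x = 0 := by
  simp [invariants]

lemma coe_invariants : (invariants ρ : Set M) = {x | ∀ i, ρ i x = 0} :=
  Set.ext fun _ => mem_invariants

lemma apply_mem_augmentation {W : Submodule R M} (i : ι) {x : M} (hx : x ∈ W) :
    ρ i x ∈ augmentation ρ W :=
  Submodule.mem_iSup_of_mem i (Submodule.mem_map_of_mem hx)

lemma augmentation_le_iff {W P : Submodule R M} :
    augmentation ρ W ≤ P ↔ ∀ i, ∀ x ∈ W, ρ i x ∈ P :=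
  iSup_le_iff.trans (forall_congr' fun _ => Submodule.map_le_iff_le_comap)

lemma augmentation_mono {W W' : Submodule R M} (h : W ≤ W') :
    augmentation ρ W ≤ augmentation ρ W' :=
  iSup_mono fun _ => Submodule.map_mono h

lemma isInvariant_span {s : Set M} (h : ∀ i, ∀ x ∈ s, ρ i x ∈ Submodule.span R s) :
    IsInvariant ρ (Submodule.span R s) := fun i =>
  Submodule.span_le (p := (Submodule.span R s).comap (ρ i)) |>.2 (h i)

lemma isInvariant_of_le_invariants {W : Submodule R M} (h : W ≤ invariants ρ) :
    IsInvariant ρ W := fun i x hx => by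
  rw [mem_invariants.1 (h hx) i]
  exact W.zero_mem

lemma IsInvariant.inf {W W' : Submodule R M} (hW : IsInvariant ρ W) (hW' : IsInvariant ρ W') :
    IsInvariant ρ (W ⊓ W') := fun i x hx => ⟨hW i x hx.1, hW' i x hx.2⟩

lemma IsInvariant.augmentation_le {W : Submodule R M} (hW : IsInvariant ρ W) :
    augmentation ρ W ≤ W :=
  augmentation_le_iff.2 hW

lemma IsInvariant.isInvariant_augmentation {W : Submodule R M} (hW : IsInvariant ρ W) :
    IsInvariant ρ (augmentation ρ W) := fun i _ hx =>
  apply_mem_augmentation i (hW.augmentation_le hx)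

lemma exists_add_eq_of_isCompl {W W' : Submodule R M} (hc : IsCompl W W') (x : M) :
    ∃ w ∈ W, ∃ w' ∈ W', w + w' = x :=
  Submodule.mem_sup.1 (hc.sup_eq_top ▸ Submodule.mem_top)

lemma apply_eq_zero_of_isCompl {W W' : Submodule R M} (hc : IsCompl W W')
    (hW' : IsInvariant ρ W') {x : M} (hx : x ∈ W') (i : ι) (h : ρ i x ∈ W) : ρ i x = 0 :=
  Submodule.disjoint_def.1 hc.disjoint _ h (hW' i x hx)

variable (hρ : IsCompletelyReducible ρ)
include hρ

lemma disjoint_invariants_augmentation_top : Disjoint (invariants ρ) (augmentation ρ ⊤) := by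
  obtain ⟨U, hU, hc⟩ := hρ _ (isInvariant_of_le_invariants le_rfl)
  refine hc.disjoint.mono_right (augmentation_le_iff.2 fun i x _ => ?_)
  obtain ⟨u, hu, v, hv, rfl⟩ := exists_add_eq_of_isCompl hc x
  rw [map_add, mem_invariants.1 hu i, zero_add]
  exact hU i v hv

lemma IsInvariant.le_augmentation_of_disjoint {C : Submodule R M} (hC : IsInvariant ρ C)
    (h : Disjoint C (invariants ρ)) : C ≤ augmentation ρ C := by
  obtain ⟨D, hD, hc⟩ := hρ _ hC.isInvariant_augmentation
  have hDC : D ⊓ C = ⊥ := by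
    refine (h.mono_left inf_le_right).eq_bot_of_le fun e he => mem_invariants.2 fun i => ?_
    exact apply_eq_zero_of_isCompl hc hD he.1 i (apply_mem_augmentation i he.2)
  refine le_of_eq ?_
  calc C = (augmentation ρ C ⊔ D) ⊓ C := by rw [hc.sup_eq_top, top_inf_eq]
    _ = augmentation ρ C := by rw [sup_inf_assoc_of_le _ hC.augmentation_le, hDC, sup_bot_eq]

lemma IsInvariant.le_invariants_sup_augmentation {S : Submodule R M} (hS : IsInvariant ρ S) :
    S ≤ S ⊓ invariants ρ ⊔ augmentation ρ S := by
  obtain ⟨T, hT, hc⟩ := hρ _ (isInvariant_of_le_invariants (inf_le_right (a := S)))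
  have hTS : Disjoint (T ⊓ S) (invariants ρ) := Submodule.disjoint_def.2 fun x hx hx' =>
    Submodule.disjoint_def.1 hc.disjoint x ⟨hx.2, hx'⟩ hx.1
  calc S = (S ⊓ invariants ρ ⊔ T) ⊓ S := by rw [hc.sup_eq_top, top_inf_eq]
    _ = S ⊓ invariants ρ ⊔ T ⊓ S := sup_inf_assoc_of_le _ inf_le_left
    _ ≤ S ⊓ invariants ρ ⊔ augmentation ρ S := sup_le_sup_left
      (((hT.inf hS).le_augmentation_of_disjoint hρ hTS).trans (augmentation_mono inf_le_right)) _

lemma inf_invariants_le_of_le_sup_augmentation {J K : Submodule R M} (hK : IsInvariant ρ K)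
    (hJK : J ≤ K ⊔ augmentation ρ ⊤) : J ⊓ invariants ρ ≤ K ⊓ invariants ρ := by
  have hK' : K ⊔ augmentation ρ ⊤ ≤ K ⊓ invariants ρ ⊔ augmentation ρ ⊤ :=
    sup_le ((hK.le_invariants_sup_augmentation hρ).trans
      (sup_le_sup_left (augmentation_mono le_top) _)) le_sup_right
  calc J ⊓ invariants ρ ≤ (K ⊓ invariants ρ ⊔ augmentation ρ ⊤) ⊓ invariants ρ :=
        inf_le_inf_right _ (hJK.trans hK')
    _ = K ⊓ invariants ρ := by
      rw [sup_inf_assoc_of_le _ inf_le_right,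
        (disjoint_invariants_augmentation_top hρ).symm.eq_bot, sup_bot_eq]

lemma IsInvariant.exists_invariant_sub_mem {J : Submodule R M} (hJ : IsInvariant ρ J) {x : M}
    (hx : ∀ i, ρ i x ∈ J) : ∃ y ∈ invariants ρ, x - y ∈ J := by
  obtain ⟨W, hW, hc⟩ := hρ J hJ
  obtain ⟨j, hj, w, hw, rfl⟩ := exists_add_eq_of_isCompl hc x
  refine ⟨w, mem_invariants.2 fun i => apply_eq_zero_of_isCompl hc hW hw i ?_, ?_⟩
  · simpa using J.sub_mem (hx i) (hJ i j hj)
  · simpa using hj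

end OperatorFamily

open OperatorFamily

section AdjointAction

variable {R A L : Type*} [CommRing R] [Ring A] [Algebra R A] [LieRing L] [LieAlgebra R L]

lemma lie_mul_eq_lie_mul_add_mul_lie (x a b : A) : ⁅x, a * b⁆ = ⁅x, a⁆ * b + a * ⁅x, b⁆ := by
  simp only [Ring.lie_def]
  noncomm_ring

variable (μ : L →ₗ⁅R⁆ A)

def adjointAction (z : L) : Module.End R A :=
  LieAlgebra.ad R A (μ z)

def leftIdealSpan : Submodule R A :=
  Submodule.span R {x : A | ∃ (a : A) (z : L), x = a * μ z}

def rightIdealSpan : Submodule R A :=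
  Submodule.span R {x : A | ∃ (a : A) (z : L), x = μ z * a}

lemma isInvariant_leftIdealSpan : IsInvariant (adjointAction μ) (leftIdealSpan μ) := by
  refine isInvariant_span fun z _ ⟨a, w, hx⟩ => ?_
  rw [hx, adjointAction, LieAlgebra.ad_apply, lie_mul_eq_lie_mul_add_mul_lie, ← μ.map_lie]
  exact add_mem (Submodule.subset_span ⟨_, w, rfl⟩) (Submodule.subset_span ⟨a, _, rfl⟩)

lemma isInvariant_rightIdealSpan : IsInvariant (adjointAction μ) (rightIdealSpan μ) := by
  refine isInvariant_span fun z _ ⟨a, w, hx⟩ => ?_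
  rw [hx, adjointAction, LieAlgebra.ad_apply, lie_mul_eq_lie_mul_add_mul_lie, ← μ.map_lie]
  exact add_mem (Submodule.subset_span ⟨a, _, rfl⟩) (Submodule.subset_span ⟨_, w, rfl⟩)

lemma leftIdealSpan_le_sup_augmentation :
    leftIdealSpan μ ≤ rightIdealSpan μ ⊔ augmentation (adjointAction μ) ⊤ := by
  refine Submodule.span_le.2 fun _ ⟨a, z, hx⟩ => ?_
  have h : a * μ z = μ z * a - adjointAction μ z a := by
    rw [adjointAction, LieAlgebra.ad_apply, Ring.lie_def, sub_sub_cancel]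
  rw [hx, h]
  exact sub_mem (Submodule.mem_sup_left (Submodule.subset_span ⟨a, z, rfl⟩))
    (Submodule.mem_sup_right (apply_mem_augmentation z Submodule.mem_top))

lemma rightIdealSpan_le_sup_augmentation :
    rightIdealSpan μ ≤ leftIdealSpan μ ⊔ augmentation (adjointAction μ) ⊤ := by
  refine Submodule.span_le.2 fun _ ⟨a, z, hx⟩ => ?_
  have h : μ z * a = a * μ z + adjointAction μ z a := by
    rw [adjointAction, LieAlgebra.ad_apply, Ring.lie_def, add_sub_cancel]
  rw [hx, h]
  exact add_mem (Submodule.mem_sup_left (Submodule.subset_span ⟨a, z, rfl⟩))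
    (Submodule.mem_sup_right (apply_mem_augmentation z Submodule.mem_top))

end AdjointAction

theorem stmt2_general (A : Type*) [Ring A] [Algebra ℂ A]
    (L : Type*) [LieRing L] [LieAlgebra ℂ L]
    (μ : L →ₗ⁅ℂ⁆ A)
    (hcr : ∀ W : Submodule ℂ A, (∀ z : L, ∀ x ∈ W, ⁅μ z, x⁆ ∈ W) →
      ∃ W' : Submodule ℂ A, (∀ z : L, ∀ x ∈ W', ⁅μ z, x⁆ ∈ W') ∧ IsCompl W W')
    (Jl Jr : Submodule ℂ A)
    (hJl : Jl = Submodule.span ℂ {x : A | ∃ (a : A) (z : L), x = a * μ z})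
    (hJr : Jr = Submodule.span ℂ {x : A | ∃ (a : A) (z : L), x = μ z * a}) :
    ((Jl : Set A) ∩ {x : A | ∀ z : L, ⁅μ z, x⁆ = 0}
        = (Jr : Set A) ∩ {x : A | ∀ z : L, ⁅μ z, x⁆ = 0})
    ∧ (∀ x : A, (∀ z : L, ⁅μ z, x⁆ ∈ Jl) →
        ∃ y : A, (∀ z : L, ⁅μ z, y⁆ = 0) ∧ x - y ∈ Jl)
    ∧ (∀ x : A, (∀ z : L, ⁅μ z, x⁆ ∈ Jr) →
        ∃ y : A, (∀ z : L, ⁅μ z, y⁆ = 0) ∧ x - y ∈ Jr) := by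
  subst hJl hJr
  have hρ : IsCompletelyReducible (adjointAction μ) := hcr
  have hl := isInvariant_leftIdealSpan μ
  have hr := isInvariant_rightIdealSpan μ
  have hinv : leftIdealSpan μ ⊓ invariants (adjointAction μ) =
      rightIdealSpan μ ⊓ invariants (adjointAction μ) :=
    le_antisymm
      (inf_invariants_le_of_le_sup_augmentation hρ hr (leftIdealSpan_le_sup_augmentation μ))
      (inf_invariants_le_of_le_sup_augmentation hρ hl (rightIdealSpan_le_sup_augmentation μ))
  refine ⟨?_, fun x hx => ?_, fun x hx => ?_⟩
  · simpa only [Submodule.coe_inf, coe_invariants, adjointAction, LieAlgebra.ad_apply,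
      leftIdealSpan, rightIdealSpan] using
      congrArg SetLike.coe hinv
  · obtain ⟨y, hy, hxy⟩ := hl.exists_invariant_sub_mem hρ hx
    exact ⟨y, mem_invariants.1 hy, hxy⟩
  · obtain ⟨y, hy, hxy⟩ := hr.exists_invariant_sub_mem hρ hx
    exact ⟨y, mem_invariants.1 hy, hxy⟩

/-- Suppose `𝔤` is reductive (here: finite-dimensional with
`Tr(ad z) = 0` for all `z`) and the adjoint action `a ↦ [μ(z), a]` of `𝔤` on the
associative algebra `A` is completely reducible (every invariant subspace has an
invariant complement).  Then the invariants of the quotient `(A / A·μ(𝔤))^𝔤`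
coincide with the quotient of invariants `A^𝔤 / (A·μ(𝔤))^𝔤` (every invariant of the
quotient is represented by an invariant element of `A`), and moreover
`(A·μ(𝔤))^𝔤 = (μ(𝔤)·A)^𝔤`; together with the analogous statement for the right
ideal, all four descriptions of the quantum Hamiltonian reduction agree. -/
theorem stmt2 (A : Type*) [Ring A] [Algebra ℂ A]
    (L : Type*) [LieRing L] [LieAlgebra ℂ L] [Module.Finite ℂ L]
    (μ : L →ₗ⁅ℂ⁆ A)
    (htr : ∀ z : L, LinearMap.trace ℂ L ((LieAlgebra.ad ℂ L z : L →ₗ[ℂ] L)) = 0)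
    (hcr : ∀ W : Submodule ℂ A, (∀ z : L, ∀ x ∈ W, ⁅μ z, x⁆ ∈ W) →
      ∃ W' : Submodule ℂ A, (∀ z : L, ∀ x ∈ W', ⁅μ z, x⁆ ∈ W') ∧ IsCompl W W')
    (Jl Jr : Submodule ℂ A)
    (hJl : Jl = Submodule.span ℂ {x : A | ∃ (a : A) (z : L), x = a * μ z})
    (hJr : Jr = Submodule.span ℂ {x : A | ∃ (a : A) (z : L), x = μ z * a}) :
    ((Jl : Set A) ∩ {x : A | ∀ z : L, ⁅μ z, x⁆ = 0}
        = (Jr : Set A) ∩ {x : A | ∀ z : L, ⁅μ z, x⁆ = 0})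
    ∧ (∀ x : A, (∀ z : L, ⁅μ z, x⁆ ∈ Jl) →
        ∃ y : A, (∀ z : L, ⁅μ z, y⁆ = 0) ∧ x - y ∈ Jl)
    ∧ (∀ x : A, (∀ z : L, ⁅μ z, x⁆ ∈ Jr) →
        ∃ y : A, (∀ z : L, ⁅μ z, y⁆ = 0) ∧ x - y ∈ Jr) :=
  stmt2_general A L μ hcr Jl Jr hJl hJr
end

section
/- Let 𝔤 = 𝔤₁ ⊕ 𝔤₂ be a direct sum of reductive Lie algebras acting completely reducibly on an associative algebra A with quantum moment map μ = μ₁ ⊕ μ₂. Then μ₂ descends to a Lie algebra map μ̄₂ : 𝔤₂ → 𝔄(A, 𝔤₁, μ₁), and there is an algebra isomorphism 𝔄(A, 𝔤, μ) ≅ 𝔄(𝔄(A, 𝔤₁, μ₁), 𝔤₂, μ̄₂) (quantum Hamiltonian reduction in stages). -/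
variable (A : Type*) [Ring A] (L : Type*)

/-- The invariant subalgebra `A^𝔤` of an associative algebra under the adjoint action
`x ↦ [μ(z), x]` of a quantum moment map `μ : 𝔤 → A`: the elements commuting with all
`μ(z)`. -/
def qhrSubring (μ : L → A) : Subring A where
  carrier := {x : A | ∀ z : L, μ z * x = x * μ z}
  zero_mem' := by intro z; simp
  one_mem' := by intro z; simp
  add_mem' := by
    intro x y hx hy z
    rw [mul_add, add_mul, hx z, hy z]
  neg_mem' := by
    intro x hx z
    rw [mul_neg, neg_mul, hx z]
  mul_mem' := by
    intro x y hx hy z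
    rw [← mul_assoc, hx z, mul_assoc, hy z, ← mul_assoc]

/-- The two-sided ideal `(A·μ(𝔤))^𝔤` of `A^𝔤` (the two-sided ideal of the invariant
subalgebra generated by the invariant part of the left ideal `A·μ(𝔤)`). -/
noncomputable def qhrIdeal (μ : L → A) : TwoSidedIdeal (qhrSubring A L μ) :=
  TwoSidedIdeal.span
    {x : qhrSubring A L μ |
      (x : A) ∈ AddSubgroup.closure {y : A | ∃ (a : A) (z : L), y = a * μ z}}

/-- The quantum Hamiltonian reduction `𝔄(A, 𝔤, μ) = A^𝔤 / (A·μ(𝔤))^𝔤`. -/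
abbrev QHR (μ : L → A) : Type _ := (qhrIdeal A L μ).ringCon.Quotient

/-- The quotient map `A^𝔤 → 𝔄(A, 𝔤, μ)`. -/
noncomputable def qhrMk (μ : L → A) : qhrSubring A L μ →+* QHR A L μ :=
  (qhrIdeal A L μ).ringCon.mk'

attribute [local instance 100] LieRing.ofAssociativeRing

/-! Write `B₁ = A^{𝔤₁}`, `J₁ = A·μ₁(𝔤₁)` and `J₂ = A·μ₂(𝔤₂)`, so that
`𝔄(A, 𝔤₁, μ₁) = B₁ / (B₁ ∩ J₁)` and `A·μ(𝔤) = J₁ + J₂`. Reducing modulo `J₁` maps `A^𝔤` into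
the `μ̄₂`-invariants of `𝔄(A, 𝔤₁, μ₁)`; composed with the second reduction this map is onto,
because a class that is `𝔤₂`-invariant modulo `J₁` is moved to a genuinely `𝔤`-invariant element
by projecting along a `𝔤`-stable complement of `J₁`. Its kernel is `A^𝔤 ∩ (J₁ + J₂)`: complete
reducibility splits `A = B₁ ⊕ [μ₁(𝔤₁), A]`, and the projection `p` onto `B₁` maps `J₁` into `J₁`
and satisfies `p(a μ₂(z)) = p(a) μ₂(z)`, so modulo `B₁ ∩ J₁` every element of `B₁ ∩ (J₁ + J₂)`
lies in `B₁ · μ₂(𝔤₂)`, which is the second-stage ideal. -/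

section Reduction

variable {A L}

theorem Ideal.lie_mem_span {s : Set A} {a : A} (ha : ∀ m ∈ s, ⁅a, m⁆ ∈ Ideal.span s) {x : A}
    (hx : x ∈ Ideal.span s) : ⁅a, x⁆ ∈ Ideal.span s := by
  induction hx using Submodule.span_induction with
  | mem m hm => exact ha m hm
  | zero => simp
  | add x y _ _ hx hy => rw [lie_add]; exact add_mem hx hy
  | smul b x hx' hx =>
    have hleibniz : ⁅a, b • x⁆ = ⁅a, b⁆ * x + b * ⁅a, x⁆ := by
      simp only [smul_eq_mul, Ring.lie_def]; noncomm_ring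
    rw [hleibniz]
    exact add_mem (Ideal.mul_mem_left _ _ hx') (Ideal.mul_mem_left _ _ hx)

theorem Ideal.toAddSubgroup_span_range (ν : L → A) :
    (Ideal.span (Set.range ν)).toAddSubgroup =
      AddSubgroup.closure {y : A | ∃ (a : A) (z : L), y = a * ν z} := by
  refine le_antisymm (fun x hx => ?_) ((AddSubgroup.closure_le _).mpr ?_)
  · induction hx using Submodule.span_induction with
    | mem m hm =>
      obtain ⟨z, rfl⟩ := hm
      exact AddSubgroup.subset_closure ⟨1, z, (one_mul _).symm⟩
    | zero => exact zero_mem _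
    | add x y _ _ hx hy => exact add_mem hx hy
    | smul b x _ hx =>
      refine (AddSubgroup.closure_le _ |>.mpr ?_ :
        _ ≤ (AddSubgroup.closure _).comap (AddMonoidHom.mulLeft b)) hx
      rintro _ ⟨a, z, rfl⟩
      exact AddSubgroup.subset_closure ⟨b * a, z, (mul_assoc _ _ _).symm⟩
  · rintro _ ⟨a, z, rfl⟩
    exact Ideal.mul_mem_left _ a (Ideal.subset_span ⟨z, rfl⟩)

theorem mul_mem_span_range_of_mem_qhrSubring {ν : L → A} {x y : A}
    (hx : x ∈ Ideal.span (Set.range ν)) (hy : y ∈ qhrSubring A L ν) :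
    x * y ∈ Ideal.span (Set.range ν) := by
  induction hx using Submodule.span_induction with
  | mem m hm =>
    obtain ⟨z, rfl⟩ := hm
    rw [hy z]
    exact Ideal.mul_mem_left _ y (Ideal.subset_span ⟨z, rfl⟩)
  | zero => simp
  | add x y _ _ hx hy => rw [add_mul]; exact add_mem hx hy
  | smul b x _ hx => rw [smul_eq_mul, mul_assoc]; exact Ideal.mul_mem_left _ b hx

theorem mem_qhrIdeal_iff {ν : L → A} {x : qhrSubring A L ν} :
    x ∈ qhrIdeal A L ν ↔ (x : A) ∈ Ideal.span (Set.range ν) := by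
  let J := Ideal.span (Set.range ν)
  let I : TwoSidedIdeal (qhrSubring A L ν) := TwoSidedIdeal.mk' {y | (y : A) ∈ J}
    J.zero_mem J.add_mem J.neg_mem (fun hy => J.mul_mem_left _ hy)
    (fun {_ y} hx => mul_mem_span_range_of_mem_qhrSubring hx y.2)
  rw [qhrIdeal, ← Ideal.toAddSubgroup_span_range]
  refine ⟨fun hx => ?_, fun hx => TwoSidedIdeal.subset_span hx⟩
  have hle : TwoSidedIdeal.span _ ≤ I := TwoSidedIdeal.span_le.mpr fun y hy => by
    simp only [I, SetLike.mem_coe, TwoSidedIdeal.mem_mk']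
    exact hy
  simpa [I] using hle hx

theorem qhrMk_surjective (ν : L → A) : Function.Surjective (qhrMk A L ν) :=
  RingCon.mk'_surjective _

theorem qhrMk_eq_zero_iff {ν : L → A} {x : qhrSubring A L ν} :
    qhrMk A L ν x = 0 ↔ (x : A) ∈ Ideal.span (Set.range ν) := by
  rw [← mem_qhrIdeal_iff, ← TwoSidedIdeal.mem_ker, qhrMk, TwoSidedIdeal.ker_ringCon_mk']

theorem TwoSidedIdeal.nonempty_ringEquiv_of_surjective {R S : Type*} [Ring R] [Ring S]
    {I : TwoSidedIdeal R} {f : R →+* S} (hf : Function.Surjective f)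
    (hI : ∀ x, f x = 0 ↔ x ∈ I) : Nonempty (I.ringCon.Quotient ≃+* S) := by
  have hker : I.ringCon = RingCon.ker f := by
    ext x y
    rw [TwoSidedIdeal.rel_iff, RingCon.ker_apply, ← hI, map_sub, sub_eq_zero]
  rw [hker]
  exact ⟨RingCon.quotientKerEquivOfSurjective f hf⟩

end Reduction

namespace Module.End

open LinearMap Submodule

variable {R M ι : Type*} [Ring R] [AddCommGroup M] [Module R M] (T : ι → Module.End R M)

def HasInvtCompl (W : Submodule R M) : Prop :=
  ∃ W', (∀ i, W' ∈ (T i).invtSubmodule) ∧ IsCompl W W'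

def IsCompletelyReducible : Prop :=
  ∀ W : Submodule R M, (∀ i, W ∈ (T i).invtSubmodule) → HasInvtCompl T W

variable {T}

theorem HasInvtCompl.comp {κ : Type*} {W : Submodule R M} (h : HasInvtCompl T W) (f : κ → ι) :
    HasInvtCompl (T ∘ f) W :=
  let ⟨W', hW', hc⟩ := h
  ⟨W', fun k => hW' (f k), hc⟩

theorem iInf_ker_mem_invtSubmodule {S : Module.End R M} (hS : ∀ i, ∃ j, ⁅S, T i⁆ = T j) :
    (⨅ i, ker (T i)) ∈ S.invtSubmodule := by
  intro x hx
  simp only [mem_comap, mem_iInf, mem_ker] at hx ⊢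
  intro i
  obtain ⟨j, hj⟩ := hS i
  have hjx := congr($hj x)
  rwa [Ring.lie_def, LinearMap.sub_apply, Module.End.mul_apply, Module.End.mul_apply, hx i,
    hx j, map_zero, zero_sub, neg_eq_zero] at hjx

theorem iSup_map_mem_invtSubmodule {S : Module.End R M} (hS : ∀ i, ∃ j, ⁅S, T i⁆ = T j)
    {J : Submodule R M} (hJ : J ∈ S.invtSubmodule) :
    (⨆ i, J.map (T i)) ∈ S.invtSubmodule := by
  rw [mem_invtSubmodule_iff_map_le, Submodule.map_iSup]
  refine iSup_le fun i => ?_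
  rintro _ ⟨_, ⟨x, hx, rfl⟩, rfl⟩
  obtain ⟨j, hj⟩ := hS i
  have hST : S (T i x) = T j x + T i (S x) := by
    rw [← Module.End.mul_apply, ← sub_eq_iff_eq_add, ← Module.End.mul_apply,
      ← LinearMap.sub_apply, ← Ring.lie_def, hj]
  rw [hST]
  exact add_mem (mem_iSup_of_mem j (mem_map_of_mem hx))
    (mem_iSup_of_mem i (mem_map_of_mem (hJ hx)))

theorem le_iInf_ker_of_disjoint {V W : Submodule R M} (hW : ∀ i, W ∈ (T i).invtSubmodule)
    (hWV : ∀ i, W.map (T i) ≤ V) (hVW : Disjoint V W) : W ≤ ⨅ i, ker (T i) := by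
  intro x hx
  simp only [mem_iInf, mem_ker]
  exact fun i => disjoint_def.mp hVW _ (hWV i (mem_map_of_mem hx)) (hW i hx)

theorem isCompl_iInf_ker_iSup_range (hG : HasInvtCompl T (⨆ i, range (T i)))
    (hFG : HasInvtCompl T ((⨅ i, ker (T i)) ⊓ ⨆ i, range (T i))) :
    IsCompl (⨅ i, ker (T i)) (⨆ i, range (T i)) := by
  obtain ⟨W, hW, hGW⟩ := hG
  obtain ⟨W', hW', hFGW'⟩ := hFG
  have hWF : W ≤ ⨅ i, ker (T i) := le_iInf_ker_of_disjoint hW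
    (fun i => map_le_range.trans (le_iSup (fun i => range (T i)) i)) hGW.disjoint
  have hGW' : ⨆ i, range (T i) ≤ W' := by
    refine iSup_le fun i => ?_
    rintro _ ⟨x, rfl⟩
    obtain ⟨u, hu, v, hv, rfl⟩ := mem_sup.mp (hFGW'.sup_eq_top ▸ mem_top : x ∈ _)
    have hTu : T i u = 0 := mem_ker.mp (mem_iInf _ |>.mp hu.1 i)
    rw [map_add, hTu, zero_add]
    exact hW' i hv
  refine ⟨disjoint_iff.mpr (hFGW'.disjoint.eq_bot_of_le (inf_le_right.trans hGW')), ?_⟩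
  exact (hGW.codisjoint.mono_right hWF).symm

theorem projection_mem_invtSubmodule (h : IsCompl (⨅ i, ker (T i)) (⨆ i, range (T i)))
    {J : Submodule R M} (hJ : ∀ i, J ∈ (T i).invtSubmodule)
    (hJc : HasInvtCompl T (⨆ i, J.map (T i))) :
    J ∈ invtSubmodule (projection _ _ h) := by
  obtain ⟨W, hW, hc⟩ := hJc
  have hTJ : ⨆ i, J.map (T i) ≤ J := iSup_le fun i => map_le_iff_le_comap.mpr (hJ i)
  have hJW : J ⊓ W ≤ ⨅ i, ker (T i) :=
    le_iInf_ker_of_disjoint (fun i => Sublattice.inf_mem (hJ i) (hW i))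
      (fun i => (map_mono inf_le_left).trans (le_iSup (fun i => J.map (T i)) i))
      (hc.disjoint.mono_right inf_le_right)
  have hdecomp : J = (⨆ i, J.map (T i)) ⊔ J ⊓ W := by
    rw [inf_comm, ← sup_inf_assoc_of_le _ hTJ, hc.sup_eq_top, top_inf_eq]
  intro x hx
  rw [hdecomp] at hx
  obtain ⟨g, hg, u, hu, rfl⟩ := mem_sup.mp hx
  have hg' : g ∈ ⨆ i, range (T i) := iSup_mono (fun i => map_le_range) hg
  rw [mem_comap, map_add, (projection_apply_eq_zero_iff h).mpr hg', zero_add,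
    projection_apply_of_mem_left h (hJW hu)]
  exact hu.1

theorem commute_projection (h : IsCompl (⨅ i, ker (T i)) (⨆ i, range (T i)))
    {φ : Module.End R M} (hφ : ∀ i, Commute φ (T i)) : Commute (projection _ _ h) φ := by
  refine (LinearMap.IsIdempotentElem.commute_iff (isIdempotentElem_projection h)).mpr ⟨?_, ?_⟩
  · rw [range_projection]
    intro x hx
    simp only [mem_comap, mem_iInf, mem_ker] at hx ⊢
    intro i
    rw [← Module.End.mul_apply, ← (hφ i).eq, Module.End.mul_apply, hx i, map_zero]
  · rw [ker_projection, mem_invtSubmodule_iff_map_le, Submodule.map_iSup]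
    refine iSup_le fun i => ?_
    rw [← range_comp, ← Module.End.mul_eq_comp, (hφ i).eq]
    exact range_comp_le_range _ _ |>.trans (le_iSup (fun i => range (T i)) i)

theorem exists_mem_iInf_ker_sub_mem {J : Submodule R M} (hJ : ∀ i, J ∈ (T i).invtSubmodule)
    (hJc : HasInvtCompl T J) {x : M} (hx : ∀ i, T i x ∈ J) :
    ∃ k ∈ ⨅ i, ker (T i), x - k ∈ J := by
  obtain ⟨K, hK, hc⟩ := hJc
  refine ⟨K.projection J hc.symm x, ?_, sub_projection_mem hc.symm x⟩
  simp only [mem_iInf, mem_ker]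
  intro i
  refine disjoint_def.mp hc.disjoint _ ?_ (hK i (projection_apply_mem hc.symm x))
  rw [← sub_sub_cancel x (K.projection J hc.symm x), map_sub]
  exact sub_mem (hx i) (hJ i (sub_projection_mem hc.symm x))

end Module.End

section Stages

open LinearMap Submodule Module.End LieAlgebra

variable {A L} {R L₁ L₂ : Type*} [CommRing R] [Algebra R A]

variable (R) in
theorem mem_qhrSubring_iff_mem_iInf_ker {ν : L → A} {x : A} :
    x ∈ qhrSubring A L ν ↔ x ∈ ⨅ z, ker (ad R A (ν z)) := by
  simp only [mem_iInf, mem_ker, ad_apply, Ring.lie_def, sub_eq_zero]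
  rfl

theorem apply_mem_qhrSubring {ν₁ : L₁ → A} {ν₂ : L₂ → A} (hcomm : ∀ x z, ⁅ν₁ x, ν₂ z⁆ = 0)
    (z : L₂) : ν₂ z ∈ qhrSubring A L₁ ν₁ := fun w =>
  sub_eq_zero.mp (by rw [← Ring.lie_def]; exact hcomm w z)

theorem qhrSubring_sumElim_le (ν₁ : L₁ → A) (ν₂ : L₂ → A) :
    qhrSubring A (L₁ ⊕ L₂) (Sum.elim ν₁ ν₂) ≤ qhrSubring A L₁ ν₁ :=
  fun _ hx w => hx (Sum.inl w)

/-- The map `μ̄₂ : 𝔤₂ → 𝔄(A, 𝔤₁, μ₁)`. -/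
noncomputable def descend (ν₁ : L₁ → A) (ν₂ : L₂ → A) (hcomm : ∀ x z, ⁅ν₁ x, ν₂ z⁆ = 0) :
    L₂ → QHR A L₁ ν₁ :=
  fun z => qhrMk A L₁ ν₁ ⟨ν₂ z, apply_mem_qhrSubring hcomm z⟩

/-- Reduction modulo `J₁` on `𝔤`-invariants, `A^𝔤 → 𝔄(A, 𝔤₁, μ₁)^{𝔤₂}`. -/
noncomputable def stageMap (ν₁ : L₁ → A) (ν₂ : L₂ → A) (hcomm : ∀ x z, ⁅ν₁ x, ν₂ z⁆ = 0) :
    qhrSubring A (L₁ ⊕ L₂) (Sum.elim ν₁ ν₂) →+*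
      qhrSubring (QHR A L₁ ν₁) L₂ (descend ν₁ ν₂ hcomm) :=
  ((qhrMk A L₁ ν₁).comp (Subring.inclusion (qhrSubring_sumElim_le ν₁ ν₂))).codRestrict _
    fun x z => by
      simp only [RingHom.comp_apply, descend, ← map_mul]
      exact congrArg _ (Subtype.ext (x.2 (Sum.inr z)))

theorem mem_sup_of_qhrMk_mem_span {ν₁ : L₁ → A} {ν₂ : L₂ → A}
    (hcomm : ∀ x z, ⁅ν₁ x, ν₂ z⁆ = 0) {b : qhrSubring A L₁ ν₁}
    (hb : qhrMk A L₁ ν₁ b ∈ Ideal.span (Set.range (descend ν₁ ν₂ hcomm))) :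
    (b : A) ∈ Ideal.span (Set.range ν₁) ⊔ Ideal.span (Set.range ν₂) := by
  have hle : Ideal.span (Set.range (descend ν₁ ν₂ hcomm)) ≤ Ideal.map (qhrMk A L₁ ν₁)
      ((Ideal.span (Set.range ν₂)).comap (qhrSubring A L₁ ν₁).subtype) :=
    Ideal.span_le.mpr <| by
      rintro _ ⟨z, rfl⟩
      exact Ideal.mem_map_of_mem _ (Ideal.subset_span ⟨z, rfl⟩)
  obtain ⟨b', hb', hbb'⟩ :=
    (Ideal.mem_map_iff_of_surjective _ (qhrMk_surjective ν₁)).mp (hle hb)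
  have hdiff : ((b - b' : qhrSubring A L₁ ν₁) : A) ∈ Ideal.span (Set.range ν₁) :=
    qhrMk_eq_zero_iff.mp (by rw [map_sub, hbb', sub_self])
  rw [← sub_add_cancel (b : A) b']
  exact add_mem (mem_sup_left hdiff) (mem_sup_right hb')

variable [LieRing L₁] [LieAlgebra R L₁] (μ₁ : L₁ →ₗ⁅R⁆ A) (μ₂ : L₂ → A)

theorem exists_lie_sumElim_eq (hcomm : ∀ x z, ⁅μ₁ x, μ₂ z⁆ = 0) (i : L₁ ⊕ L₂) (w : L₁) :
    ∃ w', ⁅Sum.elim (⇑μ₁) μ₂ i, μ₁ w⁆ = μ₁ w' := by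
  cases i with
  | inl v => exact ⟨⁅v, w⁆, (μ₁.map_lie v w).symm⟩
  | inr z => exact ⟨0, by rw [Sum.elim_inr, ← lie_skew, hcomm, neg_zero, map_zero]⟩

theorem exists_lie_ad_sumElim_eq (hcomm : ∀ x z, ⁅μ₁ x, μ₂ z⁆ = 0) (i : L₁ ⊕ L₂) (w : L₁) :
    ∃ w', ⁅ad R A (Sum.elim (⇑μ₁) μ₂ i), ad R A (μ₁ w)⁆ = ad R A (μ₁ w') := by
  obtain ⟨w', h⟩ := exists_lie_sumElim_eq μ₁ μ₂ hcomm i w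
  exact ⟨w', by rw [← LieHom.map_lie, h]⟩

theorem span_range_mem_invtSubmodule (hcomm : ∀ x z, ⁅μ₁ x, μ₂ z⁆ = 0) (i : L₁ ⊕ L₂) :
    (Ideal.span (Set.range μ₁)).restrictScalars R ∈
      (ad R A (Sum.elim (⇑μ₁) μ₂ i)).invtSubmodule := by
  refine fun x hx => Ideal.lie_mem_span ?_ hx
  rintro _ ⟨w, rfl⟩
  obtain ⟨w', h⟩ := exists_lie_sumElim_eq μ₁ μ₂ hcomm i w
  rw [h]
  exact Ideal.subset_span ⟨w', rfl⟩

theorem commute_mulRight_ad (hcomm : ∀ x z, ⁅μ₁ x, μ₂ z⁆ = 0) (z : L₂) (w : L₁) :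
    Commute (mulRight R (μ₂ z)) (ad R A (μ₁ w)) := LinearMap.ext fun x => by
  have hμ : μ₁ w * μ₂ z = μ₂ z * μ₁ w := apply_mem_qhrSubring hcomm z w
  simp only [Module.End.mul_apply, mulRight_apply, ad_apply, Ring.lie_def, sub_mul]
  rw [mul_assoc, mul_assoc, mul_assoc, hμ]

variable {μ₁ μ₂}

theorem isCompl_iInf_ker_ad_iSup_range_ad (hcomm : ∀ x z, ⁅μ₁ x, μ₂ z⁆ = 0)
    (hcr : IsCompletelyReducible fun i => ad R A (Sum.elim (⇑μ₁) μ₂ i)) :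
    IsCompl (⨅ w, ker (ad R A (μ₁ w))) (⨆ w, range (ad R A (μ₁ w))) := by
  have hnorm := exists_lie_ad_sumElim_eq μ₁ μ₂ hcomm
  have hF (i) : (⨅ w, ker (ad R A (μ₁ w))) ∈ (ad R A (Sum.elim (⇑μ₁) μ₂ i)).invtSubmodule :=
    iInf_ker_mem_invtSubmodule (hnorm i)
  have hG (i) : (⨆ w, range (ad R A (μ₁ w))) ∈ (ad R A (Sum.elim (⇑μ₁) μ₂ i)).invtSubmodule := by
    simp_rw [← Submodule.map_top]
    exact iSup_map_mem_invtSubmodule (hnorm i) (invtSubmodule.top_mem _)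
  exact isCompl_iInf_ker_iSup_range ((hcr _ hG).comp Sum.inl)
    ((hcr _ fun i => Sublattice.inf_mem (hF i) (hG i)).comp Sum.inl)

theorem ad_mem_span_of_qhrMk_mem_qhrSubring (hcomm : ∀ x z, ⁅μ₁ x, μ₂ z⁆ = 0)
    {x : qhrSubring A L₁ μ₁}
    (hx : qhrMk A L₁ μ₁ x ∈ qhrSubring (QHR A L₁ μ₁) L₂ (descend μ₁ μ₂ hcomm)) (i : L₁ ⊕ L₂) :
    ad R A (Sum.elim (⇑μ₁) μ₂ i) x ∈ (Ideal.span (Set.range μ₁)).restrictScalars R := by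
  cases i with
  | inl w =>
    rw [Sum.elim_inl, ad_apply, Ring.lie_def, sub_eq_zero.mpr (x.2 w)]
    exact zero_mem _
  | inr z =>
    let m : qhrSubring A L₁ μ₁ := ⟨μ₂ z, apply_mem_qhrSubring hcomm z⟩
    have hm : qhrMk A L₁ μ₁ (m * x - x * m) = 0 := by
      rw [map_sub, map_mul, map_mul, sub_eq_zero]
      exact hx z
    rw [Sum.elim_inr, ad_apply, Ring.lie_def]
    exact qhrMk_eq_zero_iff.mp hm

theorem stageMap_surjective (hcomm : ∀ x z, ⁅μ₁ x, μ₂ z⁆ = 0)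
    (hcr : IsCompletelyReducible fun i => ad R A (Sum.elim (⇑μ₁) μ₂ i)) :
    Function.Surjective (stageMap (⇑μ₁) μ₂ hcomm) := by
  intro c
  obtain ⟨x, hx⟩ := qhrMk_surjective (⇑μ₁) (c : QHR A L₁ μ₁)
  have hJ := span_range_mem_invtSubmodule μ₁ μ₂ hcomm
  obtain ⟨k, hk, hxk⟩ := exists_mem_iInf_ker_sub_mem hJ (hcr _ hJ)
    (ad_mem_span_of_qhrMk_mem_qhrSubring hcomm (hx ▸ c.2))
  refine ⟨⟨k, (mem_qhrSubring_iff_mem_iInf_ker R).mpr hk⟩, Subtype.ext ?_⟩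
  change qhrMk A L₁ μ₁ ⟨k, _⟩ = c
  rw [← hx, ← sub_eq_zero, ← map_sub, qhrMk_eq_zero_iff]
  have hkx := neg_mem hxk
  rwa [neg_sub] at hkx

variable (h : IsCompl (⨅ w, ker (ad R A (μ₁ w))) (⨆ w, range (ad R A (μ₁ w))))

/-- `A → 𝔄(A, 𝔤₁, μ₁)`: project onto `A^{𝔤₁}` along `[μ₁(𝔤₁), A]`, then reduce. -/
noncomputable def qhrMkProj : A →+ QHR A L₁ μ₁ where
  toFun x := qhrMk A L₁ μ₁
    ⟨projection _ _ h x, (mem_qhrSubring_iff_mem_iInf_ker R).mpr (projection_apply_mem h x)⟩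
  map_zero' := by
    rw [← map_zero (qhrMk A L₁ μ₁)]
    exact congrArg _ (Subtype.ext (map_zero _))
  map_add' x y := by
    rw [← map_add]
    exact congrArg _ (Subtype.ext (map_add _ x y))

theorem qhrMkProj_coe (b : qhrSubring A L₁ μ₁) : qhrMkProj h b = qhrMk A L₁ μ₁ b :=
  congrArg (qhrMk A L₁ μ₁) (Subtype.ext (projection_apply_of_mem_left h
    ((mem_qhrSubring_iff_mem_iInf_ker R).mp b.2)))

theorem qhrMkProj_eq_zero (hcomm : ∀ x z, ⁅μ₁ x, μ₂ z⁆ = 0)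
    (hcr : IsCompletelyReducible fun i => ad R A (Sum.elim (⇑μ₁) μ₂ i)) {x : A}
    (hx : x ∈ Ideal.span (Set.range μ₁)) : qhrMkProj h x = 0 := by
  have hnorm := exists_lie_ad_sumElim_eq μ₁ μ₂ hcomm
  have hJ := span_range_mem_invtSubmodule μ₁ μ₂ hcomm
  refine qhrMk_eq_zero_iff.mpr (projection_mem_invtSubmodule h (fun w => hJ (Sum.inl w)) ?_ hx)
  exact (hcr _ fun i => iSup_map_mem_invtSubmodule (hnorm i) (hJ i)).comp Sum.inl

theorem qhrMkProj_mem_span (hcomm : ∀ x z, ⁅μ₁ x, μ₂ z⁆ = 0) {x : A}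
    (hx : x ∈ Ideal.span (Set.range μ₂)) :
    qhrMkProj h x ∈ Ideal.span (Set.range (descend μ₁ μ₂ hcomm)) := by
  rw [← Submodule.mem_toAddSubgroup, Ideal.toAddSubgroup_span_range] at hx
  refine (AddSubgroup.closure_le
    ((Ideal.span (Set.range (descend μ₁ μ₂ hcomm))).toAddSubgroup.comap (qhrMkProj h))).mpr ?_ hx
  rintro _ ⟨a, z, rfl⟩
  have hproj : projection _ _ h (a * μ₂ z) = projection _ _ h a * μ₂ z :=
    LinearMap.congr_fun (commute_projection h (commute_mulRight_ad μ₁ μ₂ hcomm z)).eq a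
  have hmul : qhrMkProj h (a * μ₂ z) = qhrMkProj h a * descend μ₁ μ₂ hcomm z := by
    rw [qhrMkProj, descend, AddMonoidHom.coe_mk, ZeroHom.coe_mk, ← map_mul]
    exact congrArg _ (Subtype.ext hproj)
  rw [SetLike.mem_coe, AddSubgroup.mem_comap, hmul]
  exact Ideal.mul_mem_left _ _ (Ideal.subset_span ⟨z, rfl⟩)

theorem qhrMk_stageMap_eq_zero_iff (hcomm : ∀ x z, ⁅μ₁ x, μ₂ z⁆ = 0)
    (hcr : IsCompletelyReducible fun i => ad R A (Sum.elim (⇑μ₁) μ₂ i))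
    (x : qhrSubring A (L₁ ⊕ L₂) (Sum.elim (⇑μ₁) μ₂)) :
    qhrMk _ L₂ _ (stageMap (⇑μ₁) μ₂ hcomm x) = 0 ↔
      x ∈ qhrIdeal A (L₁ ⊕ L₂) (Sum.elim (⇑μ₁) μ₂) := by
  rw [qhrMk_eq_zero_iff, mem_qhrIdeal_iff, Set.Sum.elim_range, Ideal.span_union]
  refine ⟨mem_sup_of_qhrMk_mem_span hcomm, fun hx => ?_⟩
  obtain ⟨j₁, hj₁, j₂, hj₂, hsum⟩ := Submodule.mem_sup.mp hx
  have h := isCompl_iInf_ker_ad_iSup_range_ad hcomm hcr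
  have hproj : (stageMap (⇑μ₁) μ₂ hcomm x : QHR A L₁ μ₁) = qhrMkProj h x :=
    (qhrMkProj_coe h _).symm
  rw [hproj, ← hsum, map_add, qhrMkProj_eq_zero h hcomm hcr hj₁, zero_add]
  exact qhrMkProj_mem_span h hcomm hj₂

end Stages

/-- Let `𝔤 = 𝔤₁ ⊕ 𝔤₂` be a direct sum of reductive Lie algebras acting
completely reducibly on an associative algebra `A` with quantum moment map
`μ = μ₁ ⊕ μ₂` (so `[μ₁(𝔤₁), μ₂(𝔤₂)] = 0`).  Then `μ₂` descends to a map
`μ̄₂ : 𝔤₂ → 𝔄(A, 𝔤₁, μ₁)` (its values `μ₂(z)` are `𝔤₁`-invariant, and `μ̄₂` is the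
composite with the quotient map), and there is an isomorphism
`𝔄(A, 𝔤, μ) ≅ 𝔄(𝔄(A, 𝔤₁, μ₁), 𝔤₂, μ̄₂)` — quantum Hamiltonian reduction in stages. -/
theorem stmt4 (A : Type*) [Ring A] [Algebra ℂ A]
    (L₁ L₂ : Type*) [LieRing L₁] [LieAlgebra ℂ L₁]
    [LieRing L₂] [LieAlgebra ℂ L₂]
    (μ₁ : L₁ →ₗ⁅ℂ⁆ A) (μ₂ : L₂ →ₗ⁅ℂ⁆ A)
    (hcomm : ∀ (x : L₁) (z : L₂), ⁅μ₁ x, μ₂ z⁆ = 0)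
    (hcr : ∀ W : Submodule ℂ A,
      (∀ z : L₁ ⊕ L₂, ∀ x ∈ W, ⁅Sum.elim (⇑μ₁) (⇑μ₂) z, x⁆ ∈ W) →
      ∃ W' : Submodule ℂ A,
        (∀ z : L₁ ⊕ L₂, ∀ x ∈ W', ⁅Sum.elim (⇑μ₁) (⇑μ₂) z, x⁆ ∈ W') ∧ IsCompl W W')
    (μ₂bar : L₂ → QHR A L₁ (⇑μ₁))
    (hμ₂bar : ∀ z : L₂, μ₂bar z = qhrMk A L₁ (⇑μ₁)
      ⟨μ₂ z, fun w => sub_eq_zero.mp (by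
        have h := hcomm w z
        rwa [Ring.lie_def] at h)⟩) :
    Nonempty (QHR A (L₁ ⊕ L₂) (Sum.elim (⇑μ₁) (⇑μ₂)) ≃+* QHR (QHR A L₁ (⇑μ₁)) L₂ μ₂bar) := by
  obtain rfl : μ₂bar = descend (⇑μ₁) (⇑μ₂) hcomm := funext hμ₂bar
  -- `hcr` unfolds to `IsCompletelyReducible` for the family `ad (μ i)`.
  exact TwoSidedIdeal.nonempty_ringEquiv_of_surjective
    (f := (qhrMk _ L₂ _).comp (stageMap (⇑μ₁) (⇑μ₂) hcomm))
    ((qhrMk_surjective _).comp (stageMap_surjective hcomm hcr))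
    (qhrMk_stageMap_eq_zero_iff hcomm hcr)
end

section
/- Restriction of differential operators from Hom(ℂ^{m}, ℂ^{r}) (m < r) to the open subset Inc(ℂ^m, ℂ^r) of injective maps is an isomorphism of algebras 𝒟(Hom(ℂ^m, ℂ^r)) ≅ 𝒟(Inc(ℂ^m, ℂ^r)), because the complement has codimension ≥ 2. -/
set_option synthInstance.maxHeartbeats 1000000
set_option maxHeartbeats 1000000

/-- One step of the Grothendieck filtration: operators whose commutator with every
multiplication operator lies in `W`. -/
noncomputable def diffOpStep (R : Type*) [CommRing R] [Algebra ℂ R]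
    (W : Submodule ℂ (Module.End ℂ R)) : Submodule ℂ (Module.End ℂ R) where
  carrier := {φ | ∀ r : R, φ * LinearMap.mulLeft ℂ r - LinearMap.mulLeft ℂ r * φ ∈ W}
  add_mem' := by
    intro a b ha hb r
    have h : (a + b) * LinearMap.mulLeft ℂ r - LinearMap.mulLeft ℂ r * (a + b)
        = (a * LinearMap.mulLeft ℂ r - LinearMap.mulLeft ℂ r * a)
          + (b * LinearMap.mulLeft ℂ r - LinearMap.mulLeft ℂ r * b) := by noncomm_ring
    rw [h]; exact W.add_mem (ha r) (hb r)
  zero_mem' := by intro r; simp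
  smul_mem' := by
    intro c a ha r
    have h : (c • a) * LinearMap.mulLeft ℂ r - LinearMap.mulLeft ℂ r * (c • a)
        = c • (a * LinearMap.mulLeft ℂ r - LinearMap.mulLeft ℂ r * a) := by
      rw [smul_sub, smul_mul_assoc, mul_smul_comm]
    rw [h]; exact W.smul_mem c (ha r)

/-- The filtration of the algebra of (Grothendieck) differential operators on a
commutative `ℂ`-algebra `R`: `𝒟⁰ = {φ | [φ, r] = 0 ∀ r} (= R)` and
`𝒟ⁿ⁺¹ = {φ | [φ, r] ∈ 𝒟ⁿ ∀ r}`; the algebra of differential operators is `⋃ₙ 𝒟ⁿ`. -/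
noncomputable def diffOpFil (R : Type*) [CommRing R] [Algebra ℂ R] :
    ℕ → Submodule ℂ (Module.End ℂ R)
  | 0 => diffOpStep R ⊥
  | n + 1 => diffOpStep R (diffOpFil R n)

/-!
A rational function on `Hom(ℂ^m, ℂ^r)` that is regular on `Inc(ℂ^m, ℂ^r)` lies in every
localization `ℂ[x][1/d]` at a maximal minor `d`, so the denominator of its reduced fraction
divides a power of every maximal minor. No prime polynomial divides all maximal minors: a prime
involves some variable `x_{ik}`, and since `m < r` there is a minor on columns avoiding `k`
(this is the codimension `≥ 2` of the complement). Hence the denominator is a unit and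
restriction `ℂ[x] → 𝒪(Inc)` is an isomorphism; the Grothendieck filtration is defined from the
algebra structure alone, so conjugation by any algebra isomorphism carries it to itself.
-/

section Transport

variable {R S : Type*} [CommRing R] [Algebra ℂ R] [CommRing S] [Algebra ℂ S] (e : R ≃ₐ[ℂ] S)

lemma AlgEquiv.conj_mul (f g : Module.End ℂ R) :
    e.toLinearEquiv.conj (f * g) = e.toLinearEquiv.conj f * e.toLinearEquiv.conj g :=
  LinearEquiv.conj_comp _ _ _

lemma AlgEquiv.conj_mulLeft (r : R) :
    e.toLinearEquiv.conj (LinearMap.mulLeft ℂ r) = LinearMap.mulLeft ℂ (e r) := by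
  ext x
  simp

lemma map_conj_diffOpStep (W : Submodule ℂ (Module.End ℂ R)) :
    (diffOpStep R W).map e.toLinearEquiv.conj.toLinearMap =
      diffOpStep S (W.map e.toLinearEquiv.conj.toLinearMap) := by
  ext ψ
  have hconj (s : S) : e.symm.toLinearEquiv.conj
      (ψ * LinearMap.mulLeft ℂ s - LinearMap.mulLeft ℂ s * ψ) =
        e.symm.toLinearEquiv.conj ψ * LinearMap.mulLeft ℂ (e.symm s) -
          LinearMap.mulLeft ℂ (e.symm s) * e.symm.toLinearEquiv.conj ψ := by
    rw [map_sub, AlgEquiv.conj_mul, AlgEquiv.conj_mul, AlgEquiv.conj_mulLeft]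
  rw [Submodule.mem_map_equiv]
  change (∀ r : R, _) ↔ ∀ s : S, _ ∈ W.map _
  simp only [Submodule.mem_map_equiv]
  rw [← e.symm.toEquiv.forall_congr_right]
  exact forall_congr' fun s => Iff.of_eq (congrArg (· ∈ W) (hconj s)).symm

lemma map_conj_diffOpFil (n : ℕ) :
    (diffOpFil R n).map e.toLinearEquiv.conj.toLinearMap = diffOpFil S n := by
  induction n with
  | zero => exact (map_conj_diffOpStep e ⊥).trans (by rw [Submodule.map_bot]; rfl)
  | succ n ih => exact (map_conj_diffOpStep e _).trans (by rw [ih]; rfl)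

end Transport

section FractionRing

variable {R K : Type*} [CommRing R] [Field K] [Algebra R K]

theorem exists_mul_pow_eq_algebraMap_of_mem_adjoin {A : Type*} [CommSemiring A] [Algebra A R]
    [Algebra A K] [IsScalarTower A R K] (d : R) {x : K}
    (hx : x ∈ Algebra.adjoin A (Set.range (algebraMap R K) ∪ {(algebraMap R K d)⁻¹})) :
    ∃ (k : ℕ) (a : R), x * algebraMap R K d ^ k = algebraMap R K a := by
  induction hx using Algebra.adjoin_induction with
  | mem y hy =>
    rcases hy with ⟨a, rfl⟩ | rfl
    · exact ⟨0, a, by simp⟩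
    · by_cases hd : algebraMap R K d = 0
      · exact ⟨0, 0, by simp [hd]⟩
      · exact ⟨1, 1, by simp [hd]⟩
  | algebraMap c => exact ⟨0, algebraMap A R c, by simp [← IsScalarTower.algebraMap_apply]⟩
  | add y z _ _ hy hz =>
    obtain ⟨k, a, ha⟩ := hy
    obtain ⟨l, b, hb⟩ := hz
    refine ⟨k + l, a * d ^ l + b * d ^ k, ?_⟩
    simp only [map_add, map_mul, map_pow, ← ha, ← hb]
    ring
  | mul y z _ _ hy hz =>
    obtain ⟨k, a, ha⟩ := hy
    obtain ⟨l, b, hb⟩ := hz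
    refine ⟨k + l, a * b, ?_⟩
    rw [map_mul, ← ha, ← hb]
    ring

variable [IsDomain R] [UniqueFactorizationMonoid R] [IsFractionRing R K]

theorem IsFractionRing.den_dvd_of_mul_eq_algebraMap {x : K} {b a : R}
    (h : x * algebraMap R K b = algebraMap R K a) : (IsFractionRing.den R x : R) ∣ b := by
  have hnum : IsFractionRing.num R x * b = a * IsFractionRing.den R x := by
    have hx : x * algebraMap R K (IsFractionRing.den R x) =
        algebraMap R K (IsFractionRing.num R x) := IsFractionRing.num_mul_den_eq_num_iff_eq.mpr rfl
    apply IsFractionRing.injective R K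
    rw [map_mul, map_mul, ← hx, ← h]
    ring
  exact (IsFractionRing.num_den_reduced R x).symm.dvd_of_dvd_mul_left ⟨a, by rw [hnum, mul_comm]⟩

theorem IsFractionRing.isInteger_of_forall_mul_pow_eq_algebraMap {ι : Type*} {d : ι → R}
    (hd : ∀ p : R, Prime p → ∃ i, ¬p ∣ d i) {x : K}
    (hx : ∀ i, ∃ (k : ℕ) (a : R), x * algebraMap R K (d i) ^ k = algebraMap R K a) :
    IsLocalization.IsInteger R x := by
  refine IsFractionRing.isInteger_of_isUnit_den (by_contra fun hden => ?_)
  obtain ⟨p, hirr, hpden⟩ := WfDvdMonoid.exists_irreducible_factor hden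
    (nonZeroDivisors.coe_ne_zero _)
  have hp : Prime p := UniqueFactorizationMonoid.irreducible_iff_prime.mp hirr
  obtain ⟨i, hpi⟩ := hd p hp
  obtain ⟨k, a, hka⟩ := hx i
  rw [← map_pow] at hka
  exact hpi (hp.dvd_of_dvd_pow (hpden.trans (IsFractionRing.den_dvd_of_mul_eq_algebraMap hka)))

theorem IsFractionRing.iInf_adjoin_inv_eq_range {A : Type*} [CommSemiring A] [Algebra A R]
    [Algebra A K] [IsScalarTower A R K] {ι : Type*} (d : ι → R)
    (hd : ∀ p : R, Prime p → ∃ i, ¬p ∣ d i) :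
    ⨅ i, Algebra.adjoin A (Set.range (algebraMap R K) ∪ {(algebraMap R K (d i))⁻¹}) =
      (IsScalarTower.toAlgHom A R K).range := by
  refine le_antisymm (fun x hx => ?_) (fun x hx => ?_)
  · rw [Algebra.mem_iInf] at hx
    obtain ⟨a, rfl⟩ := IsFractionRing.isInteger_of_forall_mul_pow_eq_algebraMap hd
      fun i => exists_mul_pow_eq_algebraMap_of_mem_adjoin _ (hx i)
    exact ⟨a, rfl⟩
  · obtain ⟨a, rfl⟩ := hx
    exact Algebra.mem_iInf.mpr fun i => Algebra.subset_adjoin (Or.inl ⟨a, rfl⟩)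

end FractionRing

theorem Fin.exists_embedding_forall_ne {m r : ℕ} (h : m < r) (c : Fin r) :
    ∃ f : Fin m ↪ Fin r, ∀ a, f a ≠ c := by
  cases r with
  | zero => omega
  | succ r =>
    exact ⟨(Fin.castLEEmb (by omega)).trans (Fin.succAboveEmb c), fun _ => Fin.succAbove_ne c _⟩

namespace MvPolynomial

theorem vars_nonempty_of_prime {σ K : Type*} [Field K] {p : MvPolynomial σ K} (hp : Prime p) :
    p.vars.Nonempty := by
  by_contra h
  rw [Finset.not_nonempty_iff_eq_empty, vars_eq_empty_iff_eq_C] at h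
  have hc : p.coeff 0 ≠ 0 := fun hc => hp.ne_zero (by rw [h, hc, C_0])
  exact hp.not_isUnit (h ▸ hc.isUnit.map C)

theorem mem_vars_of_dvd {σ R : Type*} [CommSemiring R] [NoZeroDivisors R]
    {p q : MvPolynomial σ R} (hq : q ≠ 0) (hpq : p ∣ q) {i : σ} (hi : i ∈ p.vars) : i ∈ q.vars := by
  obtain ⟨u, rfl⟩ := hpq
  rw [mem_vars_iff_degreeOf_ne_zero] at hi ⊢
  rw [degreeOf_mul_eq (left_ne_zero_of_mul hq) (right_ne_zero_of_mul hq)]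
  omega

section MaximalMinor

variable (K : Type*) [CommRing K] {m r : ℕ}

noncomputable def maximalMinor (f : Fin m → Fin r) : MvPolynomial (Fin m × Fin r) K :=
  Matrix.det (Matrix.of fun a b : Fin m => X (b, f a))

variable {K}

theorem maximalMinor_ne_zero [Nontrivial K] {f : Fin m → Fin r} (hf : Function.Injective f) :
    maximalMinor K f ≠ 0 := by
  classical
  have hone : (eval fun x : Fin m × Fin r => if f x.1 = x.2 then (1 : K) else 0).mapMatrix
      (Matrix.of fun a b : Fin m => X (b, f a)) = 1 := by
    ext a b
    simp [Matrix.one_apply, hf.eq_iff, eq_comm]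
  intro h
  apply one_ne_zero (α := K)
  rw [← Matrix.det_one (n := Fin m), ← hone, ← RingHom.map_det]
  exact (congrArg _ h).trans (map_zero _)

theorem snd_mem_range_of_mem_vars_maximalMinor {f : Fin m → Fin r} {v : Fin m × Fin r}
    (hv : v ∈ (maximalMinor K f).vars) : v.2 ∈ Set.range f := by
  classical
  have hrename : maximalMinor K f =
      rename (fun x : Fin m × Fin m => (x.1, f x.2))
        (Matrix.det (Matrix.of fun a b : Fin m => X (b, a))) := by
    rw [AlgHom.map_det, maximalMinor]
    congr 1
    ext a b
    simp
  rw [hrename] at hv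
  obtain ⟨x, -, rfl⟩ := Finset.mem_image.mp (vars_rename _ _ hv)
  exact ⟨x.2, rfl⟩

end MaximalMinor

theorem exists_not_dvd_maximalMinor {K : Type*} [Field K] {m r : ℕ} (hmr : m < r)
    {p : MvPolynomial (Fin m × Fin r) K} (hp : Prime p) :
    ∃ f : Fin m ↪ Fin r, ¬p ∣ maximalMinor K f := by
  obtain ⟨v, hv⟩ := vars_nonempty_of_prime hp
  obtain ⟨f, hf⟩ := Fin.exists_embedding_forall_ne hmr v.2
  refine ⟨f, fun hdvd => ?_⟩
  obtain ⟨a, ha⟩ := snd_mem_range_of_mem_vars_maximalMinor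
    (mem_vars_of_dvd (maximalMinor_ne_zero f.injective) hdvd hv)
  exact hf a ha

end MvPolynomial

theorem stmt8_general (m r : ℕ) (hmr : m < r)
    (S : Subalgebra ℂ (FractionRing (MvPolynomial (Fin m × Fin r) ℂ)))
    (hS : S = ⨅ f : Fin m ↪ Fin r,
      Algebra.adjoin ℂ
        (Set.range (algebraMap (MvPolynomial (Fin m × Fin r) ℂ)
            (FractionRing (MvPolynomial (Fin m × Fin r) ℂ))) ∪
          {(algebraMap (MvPolynomial (Fin m × Fin r) ℂ)
              (FractionRing (MvPolynomial (Fin m × Fin r) ℂ))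
              (Matrix.det (Matrix.of fun a b : Fin m => MvPolynomial.X (b, f a))))⁻¹})) :
    ∃ e : MvPolynomial (Fin m × Fin r) ℂ ≃ₐ[ℂ] S,
      (∀ x : MvPolynomial (Fin m × Fin r) ℂ,
        (e x : FractionRing (MvPolynomial (Fin m × Fin r) ℂ))
          = algebraMap (MvPolynomial (Fin m × Fin r) ℂ)
              (FractionRing (MvPolynomial (Fin m × Fin r) ℂ)) x) ∧
      ∀ n : ℕ,
        Submodule.map (e.toLinearEquiv.conj.toLinearMap)
            (diffOpFil (MvPolynomial (Fin m × Fin r) ℂ) n)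
          = diffOpFil S n := by
  have hS_range : S = (IsScalarTower.toAlgHom ℂ _ (FractionRing _)).range :=
    hS.trans <| IsFractionRing.iInf_adjoin_inv_eq_range (A := ℂ)
      (fun f : Fin m ↪ Fin r => MvPolynomial.maximalMinor ℂ f)
      fun _ hp => MvPolynomial.exists_not_dvd_maximalMinor hmr hp
  let e := (AlgEquiv.ofInjective _ (IsFractionRing.injective _ _)).trans
    (Subalgebra.equivOfEq _ _ hS_range.symm)
  exact ⟨e, fun _ => rfl, map_conj_diffOpFil e⟩

/-- Restriction of differential operators from `Hom(ℂ^m, ℂ^r)` (`m < r`)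
to the open subset `Inc(ℂ^m, ℂ^r)` of injective maps is an isomorphism of algebras
`𝒟(Hom(ℂ^m, ℂ^r)) ≅ 𝒟(Inc(ℂ^m, ℂ^r))`, because the complement (rank `< m` locus)
has codimension `≥ 2`.  Here `O(Hom) = R = ℂ[x_{ik}]`, and the ring of regular
functions on `Inc` is `S = ⋂_d R[1/d] ⊆ Frac(R)`, the intersection over all maximal
minors `d` (the union of the principal opens `D(d)` being `Inc`); the claim is that
restriction of functions `R → S` is an isomorphism, and that conjugation by it maps
each filtration piece `𝒟ⁿ(Hom)` of the differential operators onto `𝒟ⁿ(Inc)`. -/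
theorem stmt8 (m r : ℕ) (hm : 0 < m) (hmr : m < r)
    (S : Subalgebra ℂ (FractionRing (MvPolynomial (Fin m × Fin r) ℂ)))
    (hS : S = ⨅ f : Fin m ↪ Fin r,
      Algebra.adjoin ℂ
        (Set.range (algebraMap (MvPolynomial (Fin m × Fin r) ℂ)
            (FractionRing (MvPolynomial (Fin m × Fin r) ℂ))) ∪
          {(algebraMap (MvPolynomial (Fin m × Fin r) ℂ)
              (FractionRing (MvPolynomial (Fin m × Fin r) ℂ))
              (Matrix.det (Matrix.of fun a b : Fin m => MvPolynomial.X (b, f a))))⁻¹})) :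
    ∃ e : MvPolynomial (Fin m × Fin r) ℂ ≃ₐ[ℂ] S,
      (∀ x : MvPolynomial (Fin m × Fin r) ℂ,
        (e x : FractionRing (MvPolynomial (Fin m × Fin r) ℂ))
          = algebraMap (MvPolynomial (Fin m × Fin r) ℂ)
              (FractionRing (MvPolynomial (Fin m × Fin r) ℂ)) x) ∧
      ∀ n : ℕ,
        Submodule.map (e.toLinearEquiv.conj.toLinearMap)
            (diffOpFil (MvPolynomial (Fin m × Fin r) ℂ) n)
          = diffOpFil S n :=
  stmt8_general m r hmr S hS
end
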